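/- arXiv:0905.1608 — 2 statements merged into one kernel-verified Lean document; each statement's English description precedes it below -/
import Mathlib

section
/- Let β, b ∈ ℕ^m and A ∈ ℕ^{m×n} with columns A_1,…,A_n satisfy b ≤ β and A_k ≤ β for all 1 ≤ k ≤ n, and let Θ and 𝐛 be as below with s = ∏_j (1+β_j). Then for every invertible matrix M ∈ ℝ^{s×s}, the linear system Ax = b has a solution x ∈ ℕ^n if and only if there exists a real vector 𝐲 ≥ 0 with M·Θ·𝐲 = M·𝐛. -/
/-- Row index set: vectors `w ∈ ℕ^m` with `w ≤ β` (entrywise). -/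
abbrev RowIdx (m : ℕ) (β : Fin m → ℕ) : Type := ∀ j : Fin m, Fin (β j + 1)

/-- Column index set: pairs `(k, u)` with `1 ≤ k ≤ n` and `u ∈ ℕ^m`, `u ≤ β - A_k`. -/
abbrev ColIdx (m n : ℕ) (β : Fin m → ℕ) (A : Matrix (Fin m) (Fin n) ℕ) : Type :=
  Σ k : Fin n, ∀ j : Fin m, Fin (β j - A j k + 1)

/-- The network matrix `Θ`: `Θ[w;(k,u)] = -1` if `w = u`, `+1` if `w = u + A_k`,
and `0` otherwise. -/
noncomputable def theta (m n : ℕ) (β : Fin m → ℕ) (A : Matrix (Fin m) (Fin n) ℕ) :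
    Matrix (RowIdx m β) (ColIdx m n β A) ℝ := Matrix.of fun w c =>
  if (fun j => (w j : ℕ)) = (fun j => (c.2 j : ℕ)) then -1
  else if (fun j => (w j : ℕ)) = (fun j => (c.2 j : ℕ) + A j c.1) then 1 else 0

/-- The vector `𝐛`: `𝐛[w] = (1 if w = b else 0) - (1 if w = 0 else 0)`. -/
noncomputable def bvec (m : ℕ) (β b : Fin m → ℕ) : RowIdx m β → ℝ := fun w =>
  (if (fun j => (w j : ℕ)) = b then 1 else 0)
    - (if (fun j => (w j : ℕ)) = (fun _ => (0 : ℕ)) then 1 else 0)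

/-!
Read the columns of `Θ` as the edges `u → u + A_k` of a directed graph on the box `0 ≤ w ≤ β`,
so that `Θ 𝐲 = 𝐛` says that `𝐲` is a unit flow from `0` to `b`. Both sides of the equivalence
are then reachability of `b` from `0`. A solution `x ∈ ℕⁿ` is a path that uses the edges of
type `k` exactly `x_k` times, which stays in the box because `b ≤ β`; a path gives a flow by
summing its edges. Conversely, pairing `Θ 𝐲 = 𝐛` with the indicator of the unreachable
vertices gives `1 ≤ 0` unless `b` is reachable, since a nonnegative flow cannot leave the
reachable set. Multiplying by the invertible `M` changes nothing.
-/

open Matrix Relation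

section Reachability

variable {G ι : Type*} [AddCommMonoid G] (g : ι → G)

def AddStep (v w : G) : Prop := ∃ i, w = v + g i

variable {g}

theorem reflTransGen_addStep_add {b : G} (hb : b ∈ AddSubmonoid.closure (Set.range g))
    (a : G) : ReflTransGen (AddStep g) a (a + b) := by
  induction hb using AddSubmonoid.closure_induction generalizing a with
  | mem _ h =>
    obtain ⟨i, rfl⟩ := h
    exact .single ⟨i, rfl⟩
  | zero => simpa using ReflTransGen.refl
  | add b c _ _ hb hc => simpa [add_assoc] using (hb a).trans (hc (a + b))

theorem mem_closure_range_iff_reflTransGen_addStep {b : G} :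
    b ∈ AddSubmonoid.closure (Set.range g) ↔ ReflTransGen (AddStep g) 0 b := by
  refine ⟨fun hb => by simpa using reflTransGen_addStep_add hb 0, fun h => ?_⟩
  induction h with
  | refl => exact zero_mem _
  | tail _ hstep ih =>
    obtain ⟨i, rfl⟩ := hstep
    exact add_mem ih (AddSubmonoid.subset_closure ⟨i, rfl⟩)

end Reachability

theorem exists_sum_mul_eq_iff_reflTransGen {ι κ : Type*} [Fintype κ] (A : Matrix ι κ ℕ)
    (b : ι → ℕ) :
    (∃ x : κ → ℕ, ∀ j, ∑ k, A j k * x k = b j) ↔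
      ReflTransGen (AddStep fun k j => A j k) 0 b := by
  rw [← mem_closure_range_iff_reflTransGen_addStep,
    AddSubmonoid.mem_closure_range_iff_of_fintype]
  refine exists_congr fun x => ?_
  rw [funext_iff]
  simp [Finset.sum_apply, mul_comm, eq_comm]

namespace RowIdx

variable {m : ℕ} {β : Fin m → ℕ}

def toVec (w : RowIdx m β) : Fin m → ℕ := fun j => w j

def ofVec (v : Fin m → ℕ) (hv : v ≤ β) : RowIdx m β := fun j => ⟨v j, Nat.lt_succ_of_le (hv j)⟩

theorem toVec_eq_iff {w : RowIdx m β} {v : Fin m → ℕ} (hv : v ≤ β) :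
    toVec w = v ↔ w = ofVec v hv := by
  refine ⟨fun h => funext fun j => Fin.ext (congrFun h j), ?_⟩
  rintro rfl
  rfl

theorem toVec_ofVec (v : Fin m → ℕ) (hv : v ≤ β) : toVec (ofVec v hv) = v := rfl

theorem ofVec_inj {v v' : Fin m → ℕ} (hv : v ≤ β) (hv' : v' ≤ β) :
    ofVec v hv = ofVec v' hv' ↔ v = v' := by
  rw [← toVec_eq_iff hv']
  rfl

end RowIdx

namespace ColIdx

variable {m n : ℕ} {β : Fin m → ℕ} {A : Matrix (Fin m) (Fin n) ℕ}

def src (c : ColIdx m n β A) : Fin m → ℕ := fun j => c.2 j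

def tgt (c : ColIdx m n β A) : Fin m → ℕ := src c + fun j => A j c.1

theorem src_le (c : ColIdx m n β A) : src c ≤ β := fun j => by
  have := (c.2 j).isLt
  simp only [src]
  omega

theorem tgt_le (hA : ∀ k j, A j k ≤ β j) (c : ColIdx m n β A) : tgt c ≤ β := fun j => by
  have := (c.2 j).isLt
  have := hA c.1 j
  simp only [tgt, src, Pi.add_apply]
  omega

end ColIdx

open RowIdx ColIdx

section Theta

variable {m n : ℕ} {β : Fin m → ℕ} {A : Matrix (Fin m) (Fin n) ℕ}

theorem theta_apply (w : RowIdx m β) (c : ColIdx m n β A) :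
    theta m n β A w c =
      if toVec w = src c then -1 else if toVec w = tgt c then 1 else 0 := rfl

-- An edge with `A_k = 0` is a loop, whose column is `-e_u` rather than `0`.
theorem col_theta (hA : ∀ k j, A j k ≤ β j) (c : ColIdx m n β A) :
    (theta m n β A).col c =
      (if src c = tgt c then 0 else Pi.single (ofVec (tgt c) (tgt_le hA c)) 1)
        - Pi.single (ofVec (src c) (src_le c)) 1 := by
  ext w
  simp only [col_apply, theta_apply, toVec_eq_iff (src_le c), toVec_eq_iff (tgt_le hA c),
    Pi.sub_apply]
  split_ifs <;> simp_all [ofVec_inj]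

theorem bvec_eq {b : Fin m → ℕ} (hb : b ≤ β) :
    bvec m β b = Pi.single (ofVec b hb) 1 - Pi.single (ofVec 0 fun _ => Nat.zero_le _) 1 := by
  ext w
  change (if toVec w = b then (1 : ℝ) else 0) - (if toVec w = 0 then 1 else 0) = _
  simp only [toVec_eq_iff hb, toVec_eq_iff (v := 0) (β := β) fun _ => Nat.zero_le _,
    Pi.sub_apply, Pi.single_apply]

theorem vecMul_theta_apply (hA : ∀ k j, A j k ≤ β j) (f : RowIdx m β → ℝ)
    (c : ColIdx m n β A) :
    (f ᵥ* theta m n β A) c =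
      (if src c = tgt c then 0 else f (ofVec (tgt c) (tgt_le hA c)))
        - f (ofVec (src c) (src_le c)) := by
  change f ⬝ᵥ (theta m n β A).col c = _
  rw [col_theta hA]
  split_ifs <;> simp [dotProduct_sub, dotProduct_single]

theorem vecMul_theta_nonpos (hA : ∀ k j, A j k ≤ β j) {f : RowIdx m β → ℝ} (hf : 0 ≤ f)
    (hmono : ∀ c, f (ofVec (tgt c) (tgt_le hA c)) ≤ f (ofVec (src c) (src_le c))) :
    f ᵥ* theta m n β A ≤ 0 := fun c => by
  rw [vecMul_theta_apply hA]
  split_ifs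
  · simpa using hf _
  · simpa using hmono c

theorem exists_theta_mulVec_eq_bvec (hA : ∀ k j, A j k ≤ β j) {w : Fin m → ℕ} (hw : w ≤ β)
    (h : ReflTransGen (AddStep fun k j => A j k) 0 w) :
    ∃ y, 0 ≤ y ∧ theta m n β A *ᵥ y = bvec m β w := by
  classical
  induction h with
  | refl => exact ⟨0, le_rfl, by simp [bvec_eq hw]⟩
  | @tail v _ _ hstep ih =>
    obtain ⟨k, rfl⟩ := hstep
    have hvk : ∀ j, v j + A j k ≤ β j := hw
    obtain ⟨y, hy, hθy⟩ := ih fun j => (Nat.le_add_right _ _).trans (hvk j)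
    let c : ColIdx m n β A := ⟨k, fun j => ⟨v j, by have := hvk j; omega⟩⟩
    change _ = bvec m β (src c) at hθy
    change ∃ y, 0 ≤ y ∧ _ = bvec m β (tgt c)
    by_cases hloop : src c = tgt c
    · exact ⟨y, hy, hloop ▸ hθy⟩
    · refine ⟨y + Pi.single c 1, add_nonneg hy (Pi.single_nonneg.2 zero_le_one), ?_⟩
      rw [mulVec_add, mulVec_single_one, col_theta hA, if_neg hloop, hθy,
        bvec_eq (src_le c), bvec_eq (tgt_le hA c)]
      abel

theorem reflTransGen_of_theta_mulVec_eq_bvec (hA : ∀ k j, A j k ≤ β j) {b : Fin m → ℕ}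
    (hb : b ≤ β) {y : ColIdx m n β A → ℝ} (hy : 0 ≤ y) (h : theta m n β A *ᵥ y = bvec m β b) :
    ReflTransGen (AddStep fun k j => A j k) 0 b := by
  classical
  by_contra hnot
  let f : RowIdx m β → ℝ := fun w =>
    if ReflTransGen (AddStep fun k j => A j k) 0 (toVec w) then 0 else 1
  have hf : 0 ≤ f := fun w => by dsimp only [f]; split_ifs <;> norm_num
  have hmono : ∀ c, f (ofVec (tgt c) (tgt_le hA c)) ≤ f (ofVec (src c) (src_le c)) := by
    intro c
    by_cases hc : ReflTransGen (AddStep fun k j => A j k) 0 (src c)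
    · have : ReflTransGen (AddStep fun k j => A j k) 0 (tgt c) := hc.tail ⟨c.1, rfl⟩
      simp [f, toVec_ofVec, hc, this]
    · simp only [f, toVec_ofVec, hc, if_false]
      exact ite_le_one zero_le_one le_rfl
  have h1 : f ⬝ᵥ bvec m β b = 1 := by
    simp [bvec_eq hb, dotProduct_sub, f, toVec_ofVec, hnot, ReflTransGen.refl]
  have h2 : f ⬝ᵥ bvec m β b ≤ 0 := by
    rw [← h, dotProduct_mulVec]
    simpa using dotProduct_le_dotProduct_of_nonneg_right (vecMul_theta_nonpos hA hf hmono) hy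
  linarith

end Theta

theorem stmt_8_general (m n : ℕ)
    (A : Matrix (Fin m) (Fin n) ℕ) (β b : Fin m → ℕ)
    (hb : ∀ j, b j ≤ β j) (hA : ∀ k j, A j k ≤ β j)
    (M : Matrix (RowIdx m β) (RowIdx m β) ℝ) (hM : IsUnit M) :
    (∃ x : Fin n → ℕ, ∀ j, ∑ k, A j k * x k = b j) ↔
    (∃ y : ColIdx m n β A → ℝ, (∀ c, 0 ≤ y c) ∧
      M.mulVec ((theta m n β A).mulVec y) = M.mulVec (bvec m β b)) := by
  simp only [(mulVec_injective_iff_isUnit.mpr hM).eq_iff]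
  rw [exists_sum_mul_eq_iff_reflTransGen]
  exact ⟨exists_theta_mulVec_eq_bvec hA hb,
    fun ⟨_, hy, h⟩ => reflTransGen_of_theta_mulVec_eq_bvec hA hb hy h⟩

/-- For any invertible `M ∈ ℝ^{s×s}`: `Ax = b` has a solution `x ∈ ℕ^n` iff
`M Θ 𝐲 = M 𝐛` for some real vector `𝐲 ≥ 0`. -/
theorem stmt_8 (m n : ℕ) (hm : 0 < m) (hn : 0 < n)
    (A : Matrix (Fin m) (Fin n) ℕ) (β b : Fin m → ℕ)
    (hb : ∀ j, b j ≤ β j) (hA : ∀ k j, A j k ≤ β j)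
    (M : Matrix (RowIdx m β) (RowIdx m β) ℝ) (hM : IsUnit M) :
    (∃ x : Fin n → ℕ, ∀ j, ∑ k, A j k * x k = b j) ↔
    (∃ y : ColIdx m n β A → ℝ, (∀ c, 0 ≤ y c) ∧
      M.mulVec ((theta m n β A).mulVec y) = M.mulVec (bvec m β b)) :=
  stmt_8_general m n A β b hb hA M hM
end

section
/- Let β, b ∈ ℕ^m and A ∈ ℕ^{m×n} with columns A_1,…,A_n satisfy b ≤ β and A_k ≤ β for all k, and let Δ, Θ be as below with s = ∏_j (1+β_j). Define the polyhedral cone C*_β := {ξ ∈ ℝ^s : Θ'Δξ ≥ 0} and, for ξ = (ξ_z) ∈ ℝ^s, the value f_ξ(b) := Σ_{z ∈ ℕ^m, z ≤ β} ξ_z · (z^b − 1). Then exactly one of the following two statements holds: (a) the system Ax = b has a solution x ∈ ℕ^n; (b*) there exists ξ ∈ C*_β with f_ξ(b) < 0. -/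
/-!
Write `Y = Δξ`. The condition `Θ'Δξ ≥ 0` says that `Y` does not decrease along the arcs
`u → u + A_k` inside the box `[0, β]` (and `Y u ≤ 0` when the arc is a loop or leaves the box),
while `f_ξ(b) = Y b - Y 0`. As `Δ` is a tensor product of invertible Vandermonde matrices, `Y`
can be any function on the box. If `b = Ax`, walking from `0` to `b` along arcs gives
`Y 0 ≤ Y b`; otherwise `Y = -1` on the points of the box outside the monoid generated by the
columns of `A` and `Y = 0` elsewhere is a certificate.
-/

open Matrix

/-- The Vandermonde matrix `Δ[z;w] = w^z` (with `0^0 = 1`), `z, w ≤ β`. -/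
noncomputable def delta (m : ℕ) (β : Fin m → ℕ) : Matrix (RowIdx m β) (RowIdx m β) ℝ :=
  Matrix.of fun z w => ∏ j, ((w j : ℕ) : ℝ) ^ (z j : ℕ)

namespace Matrix

variable {ι R : Type*} [Fintype ι] [CommRing R] {κ μ ν : ι → Type*}

def piKronecker (M : ∀ i, Matrix (κ i) (μ i) R) : Matrix (∀ i, κ i) (∀ i, μ i) R :=
  of fun z w => ∏ i, M i (z i) (w i)

theorem piKronecker_mul [DecidableEq ι] [∀ i, Fintype (μ i)]
    (M : ∀ i, Matrix (κ i) (μ i) R) (N : ∀ i, Matrix (μ i) (ν i) R) :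
    piKronecker M * piKronecker N = piKronecker fun i => M i * N i := by
  ext z w
  simp only [piKronecker, mul_apply, of_apply, Fintype.prod_sum, Finset.prod_mul_distrib]

theorem piKronecker_one [∀ i, DecidableEq (κ i)] :
    piKronecker (fun i => (1 : Matrix (κ i) (κ i) R)) = 1 := by
  ext z w
  simp only [piKronecker, of_apply, one_apply, Fintype.prod_boole, funext_iff]

theorem isUnit_piKronecker [DecidableEq ι] [∀ i, Fintype (κ i)] [∀ i, DecidableEq (κ i)]
    {M : ∀ i, Matrix (κ i) (κ i) R} (hM : ∀ i, IsUnit (M i)) : IsUnit (piKronecker M) := by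
  choose N hMN hNM using fun i => isUnit_iff_exists.mp (hM i)
  refine isUnit_iff_exists.mpr ⟨piKronecker N, ?_, ?_⟩ <;>
    simp only [piKronecker_mul, hMN, hNM, piKronecker_one]

end Matrix

theorem delta_eq_piKronecker (m : ℕ) (β : Fin m → ℕ) :
    delta m β =
      piKronecker fun j => (vandermonde fun i : Fin (β j + 1) => ((i : ℕ) : ℝ))ᵀ := by
  ext z w
  simp [delta, piKronecker, vandermonde]

theorem mulVec_delta_surjective (m : ℕ) (β : Fin m → ℕ) :
    Function.Surjective (delta m β).mulVec := by
  rw [mulVec_surjective_iff_isUnit, delta_eq_piKronecker]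
  refine isUnit_piKronecker fun j => ?_
  rw [isUnit_transpose, isUnit_iff_isUnit_det, isUnit_iff_ne_zero, det_vandermonde_ne_zero_iff]
  exact fun a b hab => Fin.ext (Nat.cast_injective hab)

theorem AddSubmonoid.apply_zero_le_of_mem_closure {M α : Type*} [AddCommMonoid M]
    [PartialOrder M] [CanonicallyOrderedAdd M] [Preorder α] {s : Set M} {β : M} {g : M → α}
    (hg : ∀ a ∈ s, ∀ u, u + a ≤ β → g u ≤ g (u + a)) {b : M}
    (hb : b ∈ AddSubmonoid.closure s) (hbβ : b ≤ β) : g 0 ≤ g b := by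
  induction hb using AddSubmonoid.closure_induction_left with
  | zero => exact le_rfl
  | add_left a ha y _ ih =>
    rw [add_comm] at hbβ ⊢
    exact (ih (le_self_add.trans hbβ)).trans (hg a ha y hbβ)

theorem exists_nat_solution_iff_mem_closure {m n : ℕ} (A : Matrix (Fin m) (Fin n) ℕ)
    (b : Fin m → ℕ) :
    (∃ x : Fin n → ℕ, ∀ j, ∑ k, A j k * x k = b j) ↔
      b ∈ AddSubmonoid.closure (Set.range fun k j => A j k) := by
  rw [← Submodule.span_nat_eq_addSubmonoidClosure, Submodule.mem_toAddSubmonoid,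
    Submodule.mem_span_range_iff_exists_fun]
  simp only [funext_iff, Finset.sum_apply, Pi.smul_apply, smul_eq_mul, mul_comm]

section Box

variable {m n : ℕ} {β : Fin m → ℕ} {A : Matrix (Fin m) (Fin n) ℕ}

namespace RowIdx

def val (w : RowIdx m β) : Fin m → ℕ := fun j => w j

theorem val_injective : Function.Injective (val (β := β)) :=
  fun _ _ h => funext fun j => Fin.ext (congrFun h j)

theorem mem_range_val {v : Fin m → ℕ} : v ∈ Set.range (val (β := β)) ↔ v ≤ β :=
  ⟨by rintro ⟨w, rfl⟩ j; exact Nat.lt_succ_iff.mp (w j).isLt,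
    fun h => ⟨fun j => ⟨v j, Nat.lt_succ_of_le (h j)⟩, rfl⟩⟩

noncomputable def extend (Y : RowIdx m β → ℝ) : (Fin m → ℕ) → ℝ :=
  Function.extend val Y 0

theorem extend_val (Y : RowIdx m β → ℝ) (w : RowIdx m β) : extend Y w.val = Y w :=
  val_injective.extend_apply Y 0 w

theorem extend_comp_val {g : (Fin m → ℕ) → ℝ} (hg : ∀ v, ¬v ≤ β → g v = 0) :
    extend (β := β) (g ∘ val) = g := by
  funext v
  by_cases hv : v ≤ β
  · obtain ⟨w, rfl⟩ := mem_range_val.mpr hv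
    exact extend_val _ w
  · have hv' : ¬∃ w, val w = v := fun ⟨w, hw⟩ => hv (mem_range_val.mp ⟨w, hw⟩)
    rw [hg v hv, extend, Function.extend_apply' _ _ _ hv']
    rfl

theorem sum_ite_val_eq (Y : RowIdx m β → ℝ) (v : Fin m → ℕ) :
    ∑ w, (if w.val = v then Y w else 0) = extend Y v := by
  classical
  by_cases hv : ∃ w₀ : RowIdx m β, w₀.val = v
  · obtain ⟨w₀, rfl⟩ := hv
    simp only [val_injective.eq_iff, Finset.sum_ite_eq', Finset.mem_univ, if_true, extend_val]
  · rw [extend, Function.extend_apply' _ _ _ hv]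
    exact Finset.sum_eq_zero fun w _ => if_neg fun h => hv ⟨w, h⟩

end RowIdx

def ColIdx.base (c : ColIdx m n β A) : Fin m → ℕ := fun j => c.2 j

def ColIdx.head (c : ColIdx m n β A) : Fin m → ℕ :=
  fun j => c.2 j + A j c.1

/-- `extend` vanishing outside the box accounts for the columns whose head leaves the box,
which have no `+1` entry. -/
theorem theta_transpose_mulVec_apply (Y : RowIdx m β → ℝ) (c : ColIdx m n β A) :
    ((theta m n β A)ᵀ *ᵥ Y) c =
      (if c.head = c.base then 0 else RowIdx.extend Y c.head) - RowIdx.extend Y c.base := by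
  have hentry : ∀ w, theta m n β A w c =
      if w.val = c.base then -1 else if w.val = c.head then 1 else 0 := fun w => rfl
  simp only [mulVec, dotProduct, transpose_apply, hentry, ← RowIdx.sum_ite_val_eq]
  split_ifs with hloop
  · rw [zero_sub, ← Finset.sum_neg_distrib]
    refine Finset.sum_congr rfl fun w _ => ?_
    split_ifs <;> simp_all
  · rw [← Finset.sum_sub_distrib]
    refine Finset.sum_congr rfl fun w _ => ?_
    split_ifs <;> simp_all

theorem extend_le_extend_add_of_theta_nonneg {Y : RowIdx m β → ℝ}
    (hY : ∀ c, 0 ≤ ((theta m n β A)ᵀ *ᵥ Y) c) (k : Fin n) (u : Fin m → ℕ)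
    (hu : u + (fun j => A j k) ≤ β) :
    RowIdx.extend Y u ≤ RowIdx.extend Y (u + fun j => A j k) := by
  have h := hY ⟨k, fun j => ⟨u j, by have := hu j; simp only [Pi.add_apply] at this; omega⟩⟩
  rw [theta_transpose_mulVec_apply] at h
  split_ifs at h with hloop
  · exact (congrArg (RowIdx.extend Y) hloop).ge
  · exact sub_nonneg.mp h

theorem extend_zero_le_of_theta_nonneg {Y : RowIdx m β → ℝ}
    (hY : ∀ c, 0 ≤ ((theta m n β A)ᵀ *ᵥ Y) c) {b : Fin m → ℕ}
    (hb : b ∈ AddSubmonoid.closure (Set.range fun k j => A j k)) (hbβ : b ≤ β) :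
    RowIdx.extend Y 0 ≤ RowIdx.extend Y b := by
  refine AddSubmonoid.apply_zero_le_of_mem_closure ?_ hb hbβ
  rintro _ ⟨k, rfl⟩ u hu
  exact extend_le_extend_add_of_theta_nonneg hY k u hu

theorem exists_theta_nonneg_extend_sub_neg {b : Fin m → ℕ}
    (hb : b ∉ AddSubmonoid.closure (Set.range fun k j => A j k)) (hbβ : b ≤ β) :
    ∃ Y : RowIdx m β → ℝ, (∀ c, 0 ≤ ((theta m n β A)ᵀ *ᵥ Y) c) ∧
      RowIdx.extend Y b - RowIdx.extend Y 0 < 0 := by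
  classical
  set S := AddSubmonoid.closure (Set.range fun k j => A j k)
  set g : (Fin m → ℕ) → ℝ := fun v => if v ≤ β ∧ v ∉ S then -1 else 0 with hg
  have hgext : RowIdx.extend (g ∘ RowIdx.val) = g :=
    RowIdx.extend_comp_val fun v hv => if_neg fun h => hv h.1
  refine ⟨g ∘ RowIdx.val, fun c => ?_, ?_⟩
  · rw [theta_transpose_mulVec_apply, hgext]
    have hbase : c.base ≤ β := fun j =>
      (Nat.lt_succ_iff.mp (c.2 j).isLt).trans (Nat.sub_le _ _)
    by_cases hbS : c.base ∈ S
    · have hhead : c.head ∈ S := S.add_mem hbS (AddSubmonoid.subset_closure ⟨c.1, rfl⟩)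
      simp [hg, hbS, hhead]
    · have hgbase : g c.base = -1 := if_pos ⟨hbase, hbS⟩
      have hghead : -1 ≤ g c.head := by simp only [hg]; split_ifs <;> norm_num
      split_ifs <;> linarith
  · rw [hgext]
    simp [hg, hb, hbβ, S.zero_mem]

theorem sum_mul_prod_pow_sub_one_eq (ξ : RowIdx m β → ℝ) {b : Fin m → ℕ} (hb : b ≤ β) :
    ∑ z : RowIdx m β, ξ z * ((∏ j, ((z j : ℕ) : ℝ) ^ b j) - 1) =
      RowIdx.extend (delta m β *ᵥ ξ) b - RowIdx.extend (delta m β *ᵥ ξ) 0 := by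
  obtain ⟨wb, rfl⟩ := RowIdx.mem_range_val.mpr hb
  obtain ⟨w₀, hw₀⟩ := RowIdx.mem_range_val.mpr (zero_le (a := β))
  rw [← hw₀, RowIdx.extend_val, RowIdx.extend_val]
  have hw₀j : ∀ j, (w₀ j : ℕ) = 0 := congrFun hw₀
  simp only [mulVec, dotProduct, delta, of_apply, hw₀j, pow_zero, Finset.prod_const_one,
    ← Finset.sum_sub_distrib, RowIdx.val, mul_sub, mul_one, mul_comm]

end Box

theorem stmt_15_general (m n : ℕ)
    (A : Matrix (Fin m) (Fin n) ℕ) (β b : Fin m → ℕ)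
    (hb : ∀ j, b j ≤ β j) :
    Xor' (∃ x : Fin n → ℕ, ∀ j, ∑ k, A j k * x k = b j)
      (∃ ξ : RowIdx m β → ℝ,
        (∀ c, 0 ≤ ((theta m n β A)ᵀ * delta m β).mulVec ξ c) ∧
        (∑ z : RowIdx m β, ξ z * ((∏ j, ((z j : ℕ) : ℝ) ^ b j) - 1)) < 0) := by
  simp only [exists_nat_solution_iff_mem_closure, ← mulVec_mulVec,
    sum_mul_prod_pow_sub_one_eq _ hb]
  by_cases hbS : b ∈ AddSubmonoid.closure (Set.range fun k j => A j k)
  · refine Or.inl ⟨hbS, ?_⟩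
    rintro ⟨ξ, hcone, hneg⟩
    linarith [extend_zero_le_of_theta_nonneg hcone hbS hb]
  · obtain ⟨Y, hcone, hneg⟩ := exists_theta_nonneg_extend_sub_neg hbS hb
    obtain ⟨ξ, rfl⟩ := mulVec_delta_surjective m β Y
    exact Or.inr ⟨⟨ξ, hcone, hneg⟩, hbS⟩

/-- Theorem of the alternative (exponential certificate): exactly one of
(a) `Ax = b` has a solution `x ∈ ℕ^n`, or (b*) `f_ξ(b) < 0` for some
`ξ ∈ C*_β = {ξ : Θ'Δξ ≥ 0}`, where `f_ξ(b) = ∑_{z ≤ β} ξ_z (z^b - 1)`. -/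
theorem stmt_15 (m n : ℕ) (hm : 0 < m) (hn : 0 < n)
    (A : Matrix (Fin m) (Fin n) ℕ) (β b : Fin m → ℕ)
    (hb : ∀ j, b j ≤ β j) (hA : ∀ k j, A j k ≤ β j) :
    Xor' (∃ x : Fin n → ℕ, ∀ j, ∑ k, A j k * x k = b j)
      (∃ ξ : RowIdx m β → ℝ,
        (∀ c, 0 ≤ ((theta m n β A)ᵀ * delta m β).mulVec ξ c) ∧
        (∑ z : RowIdx m β, ξ z * ((∏ j, ((z j : ℕ) : ℝ) ^ b j) - 1)) < 0) :=
  stmt_15_general m n A β b hb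
end
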